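/- With the same setup (all p_k > 0), (1/N^2) ∑_{k=1}^N p_k^{-1} = 1 + μ^T (Σ_μ - μ μ^T)^{-1} μ, where Σ_μ - μ μ^T is the covariance matrix of the nontrivial interactions. -/

import Mathlib

open Matrix Finset

/-- The Sylvester–Hadamard matrix of order `2^m`, indexed by sign patterns; the constant
interaction corresponds to the index `fun _ => false` (first row/column, all ones). -/
def sylvesterHadamard (m : ℕ) : Matrix (Fin m → Bool) (Fin m → Bool) ℝ :=
  fun S k => ∏ i : Fin m, if S i ∧ k i then (-1 : ℝ) else 1

/-! With `a` the trivial interaction, the second-moment matrix `M = H diag(p) H` of all `N`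
interactions has `M a a = ∑ p = 1` and row and column `a` equal to `μ`; since `H² = N • 1`, its
inverse is `N⁻² • H diag(p⁻¹) H`, with `(a, a)` entry `N⁻² ∑ p⁻¹`. The covariance matrix
`Σ_μ - μμᵀ` is the Schur complement of the unit pivot `M a a`, so its inverse is the block of
`M⁻¹` off `a`, and `μᵀ (Σ_μ - μμᵀ)⁻¹ μ = M⁻¹ a a - 1` is read off from `M⁻¹ M = 1`. -/

section UnitPivot

variable {K α : Type*} [Field K]

def unitPivotSchurCompl (M : Matrix α α K) (a : α) : Matrix {x // x ≠ a} {x // x ≠ a} K :=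
  M.submatrix Subtype.val Subtype.val - vecMulVec (fun x => M x.1 a) (fun y => M a y.1)

theorem unitPivotSchurCompl_apply (M : Matrix α α K) (a : α) (S T : {x // x ≠ a}) :
    unitPivotSchurCompl M a S T = M S T - M S a * M a T :=
  rfl

variable [Fintype α] [DecidableEq α]

theorem unitPivotSchurCompl_mul_submatrix_inv {M : Matrix α α K} {a : α} (haa : M a a = 1)
    (hM : IsUnit M.det) :
    unitPivotSchurCompl M a * M⁻¹.submatrix Subtype.val Subtype.val = 1 := by
  ext S T
  have hrow : ∑ U, M S a * M a U * M⁻¹ U T = 0 := by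
    simp_rw [mul_assoc, ← Finset.mul_sum, ← mul_apply, mul_nonsing_inv M hM,
      one_apply_ne' T.2, mul_zero]
  calc ∑ U : {x // x ≠ a}, unitPivotSchurCompl M a S U * M⁻¹ U T
      = ∑ U, (M S U - M S a * M a U) * M⁻¹ U T := by
        rw [Fintype.sum_eq_add_sum_subtype_ne _ a, haa, mul_one, sub_self, zero_mul, zero_add]
        rfl
    _ = (M * M⁻¹) S T := by simp only [sub_mul, sum_sub_distrib, hrow, sub_zero, mul_apply]
    _ = (1 : Matrix {x // x ≠ a} {x // x ≠ a} K) S T := by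
        simp only [mul_nonsing_inv M hM, one_apply, Subtype.ext_iff]

theorem unitPivotSchurCompl_inv {M : Matrix α α K} {a : α} (haa : M a a = 1)
    (hM : IsUnit M.det) :
    (unitPivotSchurCompl M a)⁻¹ = M⁻¹.submatrix Subtype.val Subtype.val :=
  inv_eq_right_inv (unitPivotSchurCompl_mul_submatrix_inv haa hM)

theorem row_dotProduct_unitPivotSchurCompl_inv_mulVec_col {M : Matrix α α K} {a : α}
    (haa : M a a = 1) (hM : IsUnit M.det) :
    (fun y : {x // x ≠ a} => M a y) ⬝ᵥ (unitPivotSchurCompl M a)⁻¹ *ᵥ (fun x => M x a) =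
      M⁻¹ a a - 1 := by
  have hcol (S : {x // x ≠ a}) : ∑ T : {x // x ≠ a}, M⁻¹ S T * M T a = -M⁻¹ S a := by
    have h := Fintype.sum_eq_add_sum_subtype_ne (fun U => M⁻¹ S U * M U a) a
    rw [← mul_apply, nonsing_inv_mul M hM, one_apply_ne S.2, haa, mul_one] at h
    linear_combination -h
  have h := Fintype.sum_eq_add_sum_subtype_ne (fun U => M a U * M⁻¹ U a) a
  rw [← mul_apply, mul_nonsing_inv M hM, one_apply_eq, haa, one_mul] at h
  simp only [unitPivotSchurCompl_inv haa hM, dotProduct, mulVec, submatrix_apply, hcol,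
    mul_neg, sum_neg_distrib]
  linear_combination h

end UnitPivot

theorem conj_diagonal_mul_conj_diagonal_inv {K n : Type*} [Field K] [Fintype n] [DecidableEq n]
    {H : Matrix n n K} {c : K} (hH : H * H = c • 1) (hc : c ≠ 0) {d : n → K}
    (hd : ∀ k, d k ≠ 0) :
    H * diagonal d * H * ((c ^ 2)⁻¹ • (H * diagonal d⁻¹ * H)) = 1 := by
  have hdd : diagonal d * diagonal d⁻¹ = 1 := by
    rw [diagonal_mul_diagonal, ← diagonal_one]
    exact congrArg diagonal (funext fun k => mul_inv_cancel₀ (hd k))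
  calc H * diagonal d * H * ((c ^ 2)⁻¹ • (H * diagonal d⁻¹ * H))
      = (c ^ 2)⁻¹ • (H * diagonal d * (H * H) * diagonal d⁻¹ * H) := by
        simp only [Matrix.mul_smul, Matrix.mul_assoc]
    _ = ((c ^ 2)⁻¹ * c * c) • 1 := by
        rw [hH, Matrix.mul_smul, Matrix.mul_one, Matrix.smul_mul, Matrix.smul_mul,
          Matrix.mul_assoc H, hdd, Matrix.mul_one, hH, smul_smul, smul_smul]
    _ = 1 := by rw [mul_assoc, ← sq, inv_mul_cancel₀ (pow_ne_zero 2 hc), one_smul]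

section SylvesterHadamard

theorem sylvesterHadamard_comm (m : ℕ) (S k : Fin m → Bool) :
    sylvesterHadamard m S k = sylvesterHadamard m k S := by
  simp only [sylvesterHadamard, and_comm]

theorem sylvesterHadamard_transpose (m : ℕ) : (sylvesterHadamard m)ᵀ = sylvesterHadamard m :=
  Matrix.ext fun S k => sylvesterHadamard_comm m k S

theorem sylvesterHadamard_apply_const_false (m : ℕ) (S : Fin m → Bool) :
    sylvesterHadamard m S (fun _ => false) = 1 := by
  simp [sylvesterHadamard]

theorem sylvesterHadamard_mul_self (m : ℕ) :
    sylvesterHadamard m * sylvesterHadamard m = (2 ^ m : ℝ) • 1 := by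
  have hbit (s t : Bool) :
      ∑ b : Bool, (if s ∧ b then (-1 : ℝ) else 1) * (if b ∧ t then -1 else 1) =
        if s = t then 2 else 0 := by
    cases s <;> cases t <;> norm_num
  ext S T
  calc (sylvesterHadamard m * sylvesterHadamard m) S T
      = ∑ k : Fin m → Bool, ∏ i, (if S i ∧ k i then (-1 : ℝ) else 1) *
          (if k i ∧ T i then -1 else 1) := by
        simp only [mul_apply, sylvesterHadamard, ← prod_mul_distrib]
    _ = ∏ i, ∑ b : Bool, (if S i ∧ b then (-1 : ℝ) else 1) * (if b ∧ T i then -1 else 1) :=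
        (Fintype.prod_sum fun i (b : Bool) =>
          (if S i ∧ b then (-1 : ℝ) else 1) * (if b ∧ T i then -1 else 1)).symm
    _ = ∏ i, if S i = T i then (2 : ℝ) else 0 := by simp only [hbit]
    _ = ((2 ^ m : ℝ) • (1 : Matrix (Fin m → Bool) (Fin m → Bool) ℝ)) S T := by
        simp [Fintype.prod_ite_zero, funext_iff, one_apply]

variable {m : ℕ} (d : (Fin m → Bool) → ℝ)

theorem sylvesterHadamard_conj_diagonal_apply_const_false (S : Fin m → Bool) :
    (sylvesterHadamard m * diagonal d * sylvesterHadamard m) S (fun _ => false) =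
      (sylvesterHadamard m *ᵥ d) S := by
  rw [mul_apply]
  simp only [mul_diagonal, sylvesterHadamard_apply_const_false, mul_one, mulVec, dotProduct]

theorem sylvesterHadamard_conj_diagonal_const_false_apply (S : Fin m → Bool) :
    (sylvesterHadamard m * diagonal d * sylvesterHadamard m) (fun _ => false) S =
      (sylvesterHadamard m *ᵥ d) S := by
  rw [← transpose_apply (sylvesterHadamard m * diagonal d * sylvesterHadamard m), transpose_mul,
    transpose_mul, sylvesterHadamard_transpose, diagonal_transpose, ← Matrix.mul_assoc,
    sylvesterHadamard_conj_diagonal_apply_const_false]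

theorem sylvesterHadamard_conj_diagonal_apply_const_false_const_false :
    (sylvesterHadamard m * diagonal d * sylvesterHadamard m) (fun _ => false) (fun _ => false) =
      ∑ k, d k := by
  rw [sylvesterHadamard_conj_diagonal_apply_const_false]
  simp only [mulVec, dotProduct, sylvesterHadamard_comm m (fun _ => false),
    sylvesterHadamard_apply_const_false, one_mul]

variable {d}

theorem sylvesterHadamard_conj_diagonal_mul_conj_diagonal_inv (hd : ∀ k, d k ≠ 0) :
    sylvesterHadamard m * diagonal d * sylvesterHadamard m *
      ((((2 : ℝ) ^ m) ^ 2)⁻¹ • (sylvesterHadamard m * diagonal d⁻¹ * sylvesterHadamard m)) = 1 :=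
  conj_diagonal_mul_conj_diagonal_inv (sylvesterHadamard_mul_self m) (by positivity) hd

theorem isUnit_det_sylvesterHadamard_conj_diagonal (hd : ∀ k, d k ≠ 0) :
    IsUnit (sylvesterHadamard m * diagonal d * sylvesterHadamard m).det :=
  isUnit_det_of_right_inverse (sylvesterHadamard_conj_diagonal_mul_conj_diagonal_inv hd)

theorem sylvesterHadamard_conj_diagonal_inv_apply_const_false_const_false (hd : ∀ k, d k ≠ 0) :
    (sylvesterHadamard m * diagonal d * sylvesterHadamard m)⁻¹ (fun _ => false) (fun _ => false) =
      (((2 : ℝ) ^ m) ^ 2)⁻¹ * ∑ k, (d k)⁻¹ := by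
  rw [inv_eq_right_inv (sylvesterHadamard_conj_diagonal_mul_conj_diagonal_inv hd),
    Matrix.smul_apply, sylvesterHadamard_conj_diagonal_apply_const_false_const_false, smul_eq_mul]
  rfl

end SylvesterHadamard

/-- Harmonic mean / Hotelling identity: with `N = 2^m` cells of positive probabilities
summing to 1, `μ` the mean vector of the `N-1` nontrivial interactions and `Σ_μ` their
second moment matrix, `(1/N²) ∑_k p_k⁻¹ = 1 + μ^T (Σ_μ - μμ^T)⁻¹ μ`. -/
theorem harmonic_mean_covariance (m : ℕ)
    (p : (Fin m → Bool) → ℝ) (hpos : ∀ k, 0 < p k) (hsum : ∑ k, p k = 1)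
    (μ : {S : Fin m → Bool // S ≠ fun _ => false} → ℝ)
    (hμ : ∀ S, μ S = ((sylvesterHadamard m).mulVec p) S.1)
    (Sig : Matrix {S : Fin m → Bool // S ≠ fun _ => false}
      {S : Fin m → Bool // S ≠ fun _ => false} ℝ)
    (hSig : ∀ S T, Sig S T =
      (sylvesterHadamard m * Matrix.diagonal p * sylvesterHadamard m) S.1 T.1) :
    (1 / ((2 : ℝ) ^ m) ^ 2) * ∑ k, (p k)⁻¹ = 1 + μ ⬝ᵥ (Sig - Matrix.vecMulVec μ μ)⁻¹.mulVec μ := by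
  have hp : ∀ k, p k ≠ 0 := fun k => (hpos k).ne'
  have hrow : (fun S : {S // S ≠ fun _ => false} =>
      (sylvesterHadamard m * diagonal p * sylvesterHadamard m) (fun _ => false) S.1) = μ :=
    funext fun S => by rw [hμ, sylvesterHadamard_conj_diagonal_const_false_apply]
  have hcol : (fun S : {S // S ≠ fun _ => false} =>
      (sylvesterHadamard m * diagonal p * sylvesterHadamard m) S.1 (fun _ => false)) = μ :=
    funext fun S => by rw [hμ, sylvesterHadamard_conj_diagonal_apply_const_false]
  have hcov : unitPivotSchurCompl (sylvesterHadamard m * diagonal p * sylvesterHadamard m)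
      (fun _ => false) = Sig - vecMulVec μ μ := by
    ext S T
    rw [unitPivotSchurCompl_apply, Matrix.sub_apply, hSig, vecMulVec_apply, ← congrFun hrow T,
      ← congrFun hcol S]
  have hquad := row_dotProduct_unitPivotSchurCompl_inv_mulVec_col
    ((sylvesterHadamard_conj_diagonal_apply_const_false_const_false p).trans hsum)
    (isUnit_det_sylvesterHadamard_conj_diagonal hp)
  rw [hrow, hcol, hcov, sylvesterHadamard_conj_diagonal_inv_apply_const_false_const_false hp]
    at hquad
  rw [hquad, one_div]
  ring
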